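/- For all real numbers λ, τ with 0 < λ < τ < 1: λ(1−τ) · ( ∫_0^λ (δ_τ(t) − (t/λ)·λ(1−τ))² dt + ∫_λ^1 (δ_τ(t) − ((1−t)/(1−λ))·λ(1−τ))² dt )^{−1/2} = √3 · λ · √(1−λ) / (τ−λ). -/

import Mathlib

open MeasureTheory ProbabilityTheory Filter
open scoped ENNReal NNReal Classical

noncomputable section

/-- A function `L`, positive on `(0,∞)`, is slowly varying if `L(at)/L(t) → 1` as `t → ∞`
for every `a > 0`. -/
def SlowlyVarying (L : ℝ → ℝ) : Prop :=
  (∀ t > 0, 0 < L t) ∧ ∀ a > 0, Tendsto (fun t => L (a * t) / L t) atTop (nhds 1)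

/-- The standard normal density `φ`. -/
def stdNormalPDF (y : ℝ) : ℝ := (Real.sqrt (2 * Real.pi))⁻¹ * Real.exp (-(y ^ 2) / 2)

/-- The `q`-th probabilists' Hermite polynomial, evaluated at `y : ℝ`. -/
def hermiteEval (q : ℕ) (y : ℝ) : ℝ := (Polynomial.aeval y) (Polynomial.hermite q)

/-- `J_q(x) = ∫ 1_{{G(y) ≤ x}} H_q(y) φ(y) dy`. -/
def Jfun (G : ℝ → ℝ) (q : ℕ) (x : ℝ) : ℝ :=
  ∫ y : ℝ, if G y ≤ x then hermiteEval q y * stdNormalPDF y else 0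

/-- `g_{D,r}(t) = t^{rD/2} L(t)^{-r/2}`. -/
def gfun (L : ℝ → ℝ) (D : ℝ) (r : ℕ) (t : ℝ) : ℝ :=
  t ^ ((r : ℝ) * D / 2) * L t ^ (-(r : ℝ) / 2)

/-- `c_r = (2 r! /((1-Dr)(2-Dr)))^{1/2}`. -/
def cconst (D : ℝ) (r : ℕ) : ℝ :=
  Real.sqrt (2 * (Nat.factorial r : ℝ) / ((1 - D * r) * (2 - D * r)))

/-- `d_{t,r} = c_r · t / g_{D,r}(t)`, for a real argument `t`. -/
def dReal (L : ℝ → ℝ) (D : ℝ) (r : ℕ) (t : ℝ) : ℝ := cconst D r * t / gfun L D r t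

/-- `d_{n,r}`. -/
def dseq (L : ℝ → ℝ) (D : ℝ) (r : ℕ) (n : ℕ) : ℝ := dReal L D r n

/-- Assumption 1 of the paper: `(ξ_i)` is a stationary centered Gaussian process with unit
variance and regularly varying autocovariances (LRD parameter `D`), `Y_i = G(ξ_i)` has a
continuous distribution function, and the Hermite rank `r` of `1_{{G(ξ_i) ≤ x}} - F(x)`
satisfies `0 < D < 1/r`.  Here `ξ` is indexed from `0`, i.e. `ξ 0` is `ξ_1`. -/
structure Assumption1 {Ω : Type*} [MeasurableSpace Ω] (P : Measure Ω)
    (ξ : ℕ → Ω → ℝ) (G : ℝ → ℝ) (L : ℝ → ℝ) (D : ℝ) (r : ℕ) : Prop where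
  meas_xi : ∀ i, Measurable (ξ i)
  meas_G : Measurable G
  stationary : ∀ n i : ℕ,
    P.map (fun ω (j : Fin n) => ξ (i + (j : ℕ)) ω) = P.map (fun ω (j : Fin n) => ξ (j : ℕ) ω)
  gaussian : ∀ n : ℕ, ∀ l : (Fin n → ℝ) →L[ℝ] ℝ, ∃ s : ℝ≥0,
    (P.map (fun ω (j : Fin n) => ξ (j : ℕ) ω)).map (fun v => l v) = gaussianReal 0 s
  variance_one : ∫ ω, ξ 0 ω ^ 2 ∂P = 1
  slowly_varying : SlowlyVarying L
  D_pos : 0 < D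
  r_pos : 1 ≤ r
  D_lt : D < 1 / (r : ℝ)
  cov_asymp :
    Tendsto (fun k : ℕ => (∫ ω, ξ 0 ω * ξ k ω ∂P) / ((k : ℝ) ^ (-D) * L k)) atTop (nhds 1)
  hermite_rank_attained : ∃ x : ℝ, Jfun G r x ≠ 0
  hermite_rank_minimal : ∀ q : ℕ, 1 ≤ q → q < r → ∀ x : ℝ, Jfun G q x = 0
  F_cont : Continuous fun x : ℝ => (P {ω | G (ξ 0 ω) ≤ x}).toReal

/-- The (marginal) distribution function `F` of `Y_1 = G(ξ_1)`. -/
def Fdist {Ω : Type*} [MeasurableSpace Ω] (P : Measure Ω) (ξ : ℕ → Ω → ℝ) (G : ℝ → ℝ)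
    (x : ℝ) : ℝ := (P {ω | G (ξ 0 ω) ≤ x}).toReal

/-- The law of `Y_1 = G(ξ_1)`; integration against it is the Lebesgue–Stieltjes integral
with respect to `F`. -/
def Ydist {Ω : Type*} [MeasurableSpace Ω] (P : Measure Ω) (ξ : ℕ → Ω → ℝ) (G : ℝ → ℝ) :
    Measure ℝ := P.map fun ω => G (ξ 0 ω)

/-- `F` has the bounded Lebesgue density `f`. -/
def HasBoundedDensity {Ω : Type*} [MeasurableSpace Ω] (P : Measure Ω) (ξ : ℕ → Ω → ℝ)
    (G : ℝ → ℝ) (f : ℝ → ℝ) : Prop :=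
  Measurable f ∧ (∀ x, 0 ≤ f x) ∧ (∃ C : ℝ, ∀ x, f x ≤ C) ∧
    ∀ x, Fdist P ξ G x = ∫ t in Set.Iic x, f t

/-- The change point `k_0 = ⌊nτ⌋`. -/
def kzero (τ : ℝ) (n : ℕ) : ℕ := ⌊(n : ℝ) * τ⌋₊

/-- The observations `X_i = μ + Y_i + h_n · 1_{{i > k_0}}`, with `Y_i = G(ξ_{i-1})` for
`i = 1, …, n` (`ξ` being indexed from `0`). -/
def Xobs {Ω : Type*} (ξ : ℕ → Ω → ℝ) (G : ℝ → ℝ) (μ : ℝ) (h : ℕ → ℝ) (τ : ℝ) (n : ℕ)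
    (ω : Ω) (i : ℕ) : ℝ :=
  μ + G (ξ (i - 1) ω) + if kzero τ n < i then h n else 0

/-- The two-sample Wilcoxon statistic `W_{k,n}` of the data `x 1, …, x n`. -/
def Wstat (x : ℕ → ℝ) (n k : ℕ) : ℝ :=
  ∑ i ∈ Finset.Icc 1 k, ∑ j ∈ Finset.Icc (k + 1) n,
    ((if x i ≤ x j then (1 : ℝ) else 0) - 1 / 2)

/-- The Wilcoxon change-point estimator: the smallest `k ∈ {1, …, n-1}` at which `|W_{k,n}|`
is maximal. -/
def kHatW (x : ℕ → ℝ) (n : ℕ) : ℕ :=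
  WithTop.untopD 0 ((Finset.Icc 1 (n - 1)).filter fun k =>
    ∀ i ∈ Finset.Icc 1 (n - 1), |Wstat x n i| ≤ |Wstat x n k|).min

/-- The rank `R_i` of `x i` among `x 1, …, x n`. -/
def rankOf (x : ℕ → ℝ) (n i : ℕ) : ℝ :=
  ∑ j ∈ Finset.Icc 1 n, if x j ≤ x i then (1 : ℝ) else 0

/-- `R̄_{j,k}`. -/
def rbar (x : ℕ → ℝ) (n j k : ℕ) : ℝ :=
  ((k : ℝ) - (j : ℝ) + 1)⁻¹ * ∑ t ∈ Finset.Icc j k, rankOf x n t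

/-- `S_t(j,k)`. -/
def Scum (x : ℕ → ℝ) (n j k t : ℕ) : ℝ :=
  ∑ i ∈ Finset.Icc j t, (rankOf x n i - rbar x n j k)

/-- The self-normalized Wilcoxon statistic `SW_{k,n}`. -/
def SWstat (x : ℕ → ℝ) (n k : ℕ) : ℝ :=
  (∑ i ∈ Finset.Icc 1 k, rankOf x n i -
      ((k : ℝ) / (n : ℝ)) * ∑ i ∈ Finset.Icc 1 n, rankOf x n i) /
    Real.sqrt ((1 / (n : ℝ)) * ∑ t ∈ Finset.Icc 1 k, Scum x n 1 k t ^ 2 +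
      (1 / (n : ℝ)) * ∑ t ∈ Finset.Icc (k + 1) n, Scum x n (k + 1) n t ^ 2)

/-- The self-normalized Wilcoxon change-point estimator on `{k1, …, k2}`. -/
def kHatSW (x : ℕ → ℝ) (n k1 k2 : ℕ) : ℕ :=
  WithTop.untopD 0 ((Finset.Icc k1 k2).filter fun k =>
    ∀ i ∈ Finset.Icc k1 k2, |SWstat x n i| ≤ |SWstat x n k|).min

/-- `δ_τ(λ)`. -/
def deltaTau (τ lam : ℝ) : ℝ := if lam ≤ τ then lam * (1 - τ) else (1 - lam) * τ

/-- Empirical distribution function `F_{j,m}` of `y_{j+1}, …, y_m`. -/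
def empDF (y : ℕ → ℝ) (j m : ℕ) (x : ℝ) : ℝ :=
  ((m : ℝ) - (j : ℝ))⁻¹ * ∑ i ∈ Finset.Icc (j + 1) m, if y i ≤ x then (1 : ℝ) else 0

/-- The integral `∫ g dF_{j,m} = (m-j)⁻¹ ∑_{i=j+1}^m g(y_i)` with respect to the empirical
distribution of `y_{j+1}, …, y_m`. -/
def empInt (y : ℕ → ℝ) (j m : ℕ) (g : ℝ → ℝ) : ℝ :=
  ((m : ℝ) - (j : ℝ))⁻¹ * ∑ i ∈ Finset.Icc (j + 1) m, g (y i)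

/-- The process `Ṽ_n(s)` (with `k_0 + ⌊m_n s⌋` encoded as `((k_0 : ℤ) + ⌊mn * s⌋).toNat`). -/
def Vtilde (Y : ℕ → ℝ) (hn mn s : ℝ) (n k0 : ℕ) : ℝ :=
  if s < 0 then
    -(∑ i ∈ Finset.Icc (((k0 : ℤ) + ⌊mn * s⌋).toNat + 1) k0, ∑ j ∈ Finset.Icc (k0 + 1) n,
      ((if Y i ≤ Y j + hn then (1 : ℝ) else 0) - (if Y i ≤ Y j then (1 : ℝ) else 0)))
  else
    -(∑ i ∈ Finset.Icc 1 k0, ∑ j ∈ Finset.Icc (k0 + 1) (((k0 : ℤ) + ⌊mn * s⌋).toNat),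
      ((if Y i ≤ Y j + hn then (1 : ℝ) else 0) - (if Y i ≤ Y j then (1 : ℝ) else 0)))

/-- `h(s; τ)`, with `intf` standing for `∫ f²(x) dx`. -/
def hShift (τ intf s : ℝ) : ℝ := if s ≤ 0 then s * (1 - τ) * intf else -s * τ * intf

/-- The in-probability limit `V(λ)` of `|SW_{⌊nλ⌋,n}|` under a fixed change. -/
def Vlimit (τ lam : ℝ) : ℝ :=
  |deltaTau τ lam| *
    ((∫ t in (0:ℝ)..lam, (deltaTau τ t - t / lam * deltaTau τ lam) ^ 2) +
      ∫ t in lam..(1:ℝ), (deltaTau τ t - (1 - t) / (1 - lam) * deltaTau τ lam) ^ 2) ^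
      (-(1 / 2) : ℝ)


open scoped ENNReal NNReal Classical

/- On `[0, λ]` the function `δ_τ` is linear, so it coincides with its chord `t ↦ (t/λ) δ_τ(λ)` and
the first integral vanishes. On `[λ, 1]` the difference between `δ_τ` and its chord is a tent that
vanishes at `λ` and `1` and has height `h = (1-τ)(τ-λ)/(1-λ)` at `τ`; the integral of its square
is `h²(1-λ)/3`. Hence the bracket is `((1-τ)(τ-λ))² / (3(1-λ))`, and raising it to the power
`-1/2` gives the claim. -/

lemma deltaTau_of_le {τ t : ℝ} (ht : t ≤ τ) : deltaTau τ t = t * (1 - τ) := if_pos ht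

lemma deltaTau_of_ge {τ t : ℝ} (ht : τ ≤ t) : deltaTau τ t = (1 - t) * τ := by
  rcases ht.lt_or_eq with ht | rfl
  · exact if_neg ht.not_ge
  · rw [deltaTau_of_le le_rfl]; ring

lemma continuous_deltaTau (τ : ℝ) : Continuous (deltaTau τ) :=
  continuous_if_le continuous_id continuous_const (by fun_prop) (by fun_prop)
    fun t ht => by rw [← ht]; ring

lemma integral_sq_of_eqOn_affine {f : ℝ → ℝ} {a b k d : ℝ} (hab : a ≤ b)
    (hf : Set.EqOn f (fun t => k * (t - d)) (Set.Icc a b)) :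
    ∫ t in a..b, f t ^ 2 = k ^ 2 * ((b - d) ^ 3 - (a - d) ^ 3) / 3 := by
  have hf2 : Set.EqOn (fun t => f t ^ 2) (fun t => k ^ 2 * (t - d) ^ 2) (Set.uIcc a b) := by
    intro t ht
    rw [Set.uIcc_of_le hab] at ht
    simp only [hf ht, mul_pow]
  rw [intervalIntegral.integral_congr hf2, intervalIntegral.integral_const_mul,
    intervalIntegral.integral_comp_sub_right (· ^ 2), integral_pow]
  ring

section

variable {lam τ : ℝ}

lemma integral_sq_deltaTau_sub_chord_left (h0 : 0 < lam) (h1 : lam < τ) :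
    ∫ t in (0:ℝ)..lam, (deltaTau τ t - t / lam * (lam * (1 - τ))) ^ 2 = 0 := by
  rw [integral_sq_of_eqOn_affine (k := 0) (d := 0) h0.le]
  · ring
  · intro t ht
    simp only [deltaTau_of_le (ht.2.trans h1.le)]
    field_simp
    ring

lemma integral_sq_deltaTau_sub_chord_right (h1 : lam < τ) (h2 : τ < 1) :
    ∫ t in lam..(1:ℝ), (deltaTau τ t - (1 - t) / (1 - lam) * (lam * (1 - τ))) ^ 2 =
      ((1 - τ) * (τ - lam)) ^ 2 / (3 * (1 - lam)) := by
  have h1l : 1 - lam ≠ 0 := by linarith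
  set f := fun t => (deltaTau τ t - (1 - t) / (1 - lam) * (lam * (1 - τ))) ^ 2
  have hf : Continuous f := by
    have := continuous_deltaTau τ
    fun_prop
  rw [← intervalIntegral.integral_add_adjacent_intervals (b := τ) (hf.intervalIntegrable _ _)
      (hf.intervalIntegrable _ _),
    integral_sq_of_eqOn_affine (k := (1 - τ) / (1 - lam)) (d := lam) h1.le,
    integral_sq_of_eqOn_affine (k := (lam - τ) / (1 - lam)) (d := 1) h2.le]
  · field_simp
    ring
  · intro t ht
    simp only [deltaTau_of_ge ht.1]
    field_simp
    ring
  · intro t ht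
    simp only [deltaTau_of_le ht.2]
    field_simp
    ring

end

lemma sq_div_rpow_neg_half {A B : ℝ} (hA : 0 < A) (hB : 0 < B) :
    (A ^ 2 / B) ^ (-(1 / 2) : ℝ) = Real.sqrt B / A := by
  rw [Real.rpow_neg (by positivity), ← Real.sqrt_eq_rpow, Real.sqrt_div' _ hB.le,
    Real.sqrt_sq hA.le, inv_div]

/-- For `0 < λ < τ < 1`, the (deterministic) limit of the self-normalized
Wilcoxon statistic at `λ ≤ τ` equals `√3 λ √(1-λ)/(τ-λ)`. -/
theorem sn_limit_value_left (lam τ : ℝ) (h0 : 0 < lam) (h1 : lam < τ) (h2 : τ < 1) :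
    lam * (1 - τ) *
      ((∫ t in (0:ℝ)..lam, (deltaTau τ t - t / lam * (lam * (1 - τ))) ^ 2) +
        ∫ t in lam..(1:ℝ), (deltaTau τ t - (1 - t) / (1 - lam) * (lam * (1 - τ))) ^ 2) ^
        (-(1 / 2) : ℝ) =
      Real.sqrt 3 * lam * Real.sqrt (1 - lam) / (τ - lam) := by
  have h1l : 0 < 1 - lam := by linarith
  have h1t : 0 < 1 - τ := by linarith
  have htl : 0 < τ - lam := by linarith
  rw [integral_sq_deltaTau_sub_chord_left h0 h1, integral_sq_deltaTau_sub_chord_right h1 h2,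
    zero_add, sq_div_rpow_neg_half (mul_pos h1t htl) (by positivity),
    Real.sqrt_mul (by norm_num)]
  field_simp
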